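/- arXiv:0802.3563 — 3 statements merged into one kernel-verified Lean document; each statement's English description precedes it below -/
import Mathlib

section
/- If P is a substochastic M×M matrix (nonnegative entries, row sums at most 1) such that from every index one can reach, through positive entries of powers of P, a row whose sum is strictly less than 1, then the spectral radius of P is strictly less than 1. -/
/-!
Row sums of `P ^ t` do not increase with `t`, and the row sum at `i` drops strictly from
`P ^ t` to `P ^ (t + 1)` as soon as `(P ^ t) i j > 0` for a row `j` of `P` with sum `< 1`.
Hence some power `P ^ N` has every row sum `< 1`, that is, `L∞` operator norm `< 1`, and the
spectral radius is at most `‖P ^ N‖ ^ (1 / N) < 1`.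
-/

open Matrix Filter Finset

noncomputable def specRad {M : ℕ} (P : Matrix (Fin M) (Fin M) ℝ) : ENNReal :=
  spectralRadius ℂ (P.map (algebraMap ℝ ℂ))

open scoped NNReal ENNReal

theorem spectrum.spectralRadius_lt_one_of_nnnorm_pow_lt_one {𝕜 A : Type*}
    [NontriviallyNormedField 𝕜] [NormedRing A] [NormedAlgebra 𝕜 A] [CompleteSpace A]
    {a : A} {n : ℕ} (h1 : ‖(1 : A)‖₊ ≤ 1) (ha : ‖a ^ (n + 1)‖₊ < 1) :
    spectralRadius 𝕜 a < 1 := by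
  have hexp : (0 : ℝ) < 1 / (n + 1) := by positivity
  calc spectralRadius 𝕜 a
      ≤ (‖a ^ (n + 1)‖₊ : ℝ≥0∞) ^ (1 / (n + 1) : ℝ) *
          (‖(1 : A)‖₊ : ℝ≥0∞) ^ (1 / (n + 1) : ℝ) :=
        spectralRadius_le_pow_nnnorm_pow_one_div 𝕜 a n
    _ ≤ (‖a ^ (n + 1)‖₊ : ℝ≥0∞) ^ (1 / (n + 1) : ℝ) :=
        mul_le_of_le_one_right zero_le
          (ENNReal.rpow_le_one (ENNReal.coe_le_one_iff.2 h1) hexp.le)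
    _ < 1 := ENNReal.rpow_lt_one (ENNReal.coe_lt_one_iff.2 ha) hexp

namespace Matrix

section RowSums

variable {ι : Type*} [Fintype ι] [DecidableEq ι] {P : Matrix ι ι ℝ}

theorem sum_pow_succ_apply (P : Matrix ι ι ℝ) (t : ℕ) (i : ι) :
    ∑ l, (P ^ (t + 1)) i l = ∑ j, (P ^ t) i j * ∑ k, P j k := by
  simp only [pow_succ, mul_apply, Finset.mul_sum]
  exact Finset.sum_comm

theorem sum_pow_succ_apply_le (hP : ∀ i j, 0 ≤ P i j) (hrow : ∀ i, ∑ j, P i j ≤ 1)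
    (t : ℕ) (i : ι) : ∑ l, (P ^ (t + 1)) i l ≤ ∑ l, (P ^ t) i l := by
  rw [sum_pow_succ_apply]
  exact Finset.sum_le_sum fun j _ => mul_le_of_le_one_right (pow_apply_nonneg hP t i j) (hrow j)

theorem sum_pow_succ_apply_lt (hP : ∀ i j, 0 ≤ P i j) (hrow : ∀ i, ∑ j, P i j ≤ 1)
    {t : ℕ} {i j : ι} (hij : 0 < (P ^ t) i j) (hj : ∑ k, P j k < 1) :
    ∑ l, (P ^ (t + 1)) i l < ∑ l, (P ^ t) i l := by
  rw [sum_pow_succ_apply]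
  exact Finset.sum_lt_sum
    (fun l _ => mul_le_of_le_one_right (pow_apply_nonneg hP t i l) (hrow l))
    ⟨j, mem_univ j, mul_lt_of_lt_one_right hij hj⟩

theorem antitone_sum_pow_apply (hP : ∀ i j, 0 ≤ P i j) (hrow : ∀ i, ∑ j, P i j ≤ 1) (i : ι) :
    Antitone fun t => ∑ l, (P ^ t) i l :=
  antitone_nat_of_succ_le fun t => sum_pow_succ_apply_le hP hrow t i

theorem exists_forall_sum_pow_succ_apply_lt_one (hP : ∀ i j, 0 ≤ P i j)
    (hrow : ∀ i, ∑ j, P i j ≤ 1) (hreach : ∀ i, ∃ t j, 0 < (P ^ t) i j ∧ ∑ k, P j k < 1) :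
    ∃ n, ∀ i, ∑ l, (P ^ (n + 1)) i l < 1 := by
  choose t j ht hj using hreach
  refine ⟨univ.sup t, fun i => ?_⟩
  calc ∑ l, (P ^ (univ.sup t + 1)) i l
      ≤ ∑ l, (P ^ (t i + 1)) i l :=
        antitone_sum_pow_apply hP hrow i (Nat.succ_le_succ (le_sup (mem_univ i)))
    _ < ∑ l, (P ^ t i) i l := sum_pow_succ_apply_lt hP hrow (ht i) (hj i)
    _ ≤ ∑ l, (P ^ 0) i l := antitone_sum_pow_apply hP hrow i (Nat.zero_le _)
    _ = 1 := by simp [one_apply]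

end RowSums

section LinftyOpNorm

open scoped Matrix.Norms.Operator

variable {ι : Type*} [Fintype ι]

theorem linfty_opNNNorm_lt_iff {m α : Type*} [Fintype m] [SeminormedAddCommGroup α]
    {A : Matrix m ι α} {r : ℝ≥0} (hr : 0 < r) : ‖A‖₊ < r ↔ ∀ i, ∑ j, ‖A i j‖₊ < r := by
  simp [linfty_opNNNorm_def, Finset.sup_lt_iff hr]

theorem linfty_opNNNorm_one_le [DecidableEq ι] {α : Type*} [SeminormedRing α] [NormOneClass α] :
    ‖(1 : Matrix ι ι α)‖₊ ≤ 1 := by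
  rw [← diagonal_one, linfty_opNNNorm_diagonal]
  exact (pi_nnnorm_const_le 1).trans nnnorm_one.le

theorem spectralRadius_map_algebraMap_lt_one [DecidableEq ι] {P : Matrix ι ι ℝ}
    (hP : ∀ i j, 0 ≤ P i j) {n : ℕ} (hn : ∀ i, ∑ l, (P ^ (n + 1)) i l < 1) :
    spectralRadius ℂ (P.map (algebraMap ℝ ℂ)) < 1 := by
  refine spectrum.spectralRadius_lt_one_of_nnnorm_pow_lt_one (n := n) linfty_opNNNorm_one_le ?_
  rw [← Matrix.map_pow, linfty_opNNNorm_lt_iff one_pos]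
  intro i
  rw [← NNReal.coe_lt_coe]
  simpa [Real.norm_of_nonneg (pow_apply_nonneg hP _ i _)] using hn i

end LinftyOpNorm

end Matrix

/-- A substochastic matrix from which every index reaches (via positive entries of
powers of `P`) a row with sum strictly less than one has spectral radius `< 1`. -/
theorem substochastic_reach_deficient_specRad_lt_one {M : ℕ}
    (P : Matrix (Fin M) (Fin M) ℝ)
    (hnonneg : ∀ i j, 0 ≤ P i j)
    (hrow : ∀ i, ∑ j, P i j ≤ 1)
    (hreach : ∀ i : Fin M, ∃ (t : ℕ) (j : Fin M),
      0 < (P ^ t) i j ∧ ∑ k, P j k < 1) :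
    specRad P < 1 := by
  obtain ⟨n, hn⟩ := exists_forall_sum_pow_succ_apply_lt_one hnonneg hrow hreach
  exact spectralRadius_map_algebraMap_lt_one hnonneg hn
end

section
/- Let p₁, p₂, p₃, p₄ be points in the plane, one in each of the four closed quadrant-sectors of a disk of radius r centered at a point l (each sector subtending angle π/2). Then l lies in the convex hull of {p₁, p₂, p₃, p₄}; moreover l lies in the convex hull of some 3-element subset of {p₁, p₂, p₃, p₄}. -/
open Set

/-! The segment from the lower-left point `p 2` to the upper-right point `p 0` crosses the
vertical line through `l` at some point `m`. If `m` lies above `l`, the segment from `p 2` to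
the lower-right point `p 3` crosses that line below `l`; otherwise the segment from the
upper-left point `p 1` to `p 0` crosses it above `l`. Either way `l` lies on a vertical segment
joining two points of the triangle spanned by three of the four points. -/

section Segment

variable {𝕜 E F : Type*} [Semiring 𝕜] [PartialOrder 𝕜] [AddCommMonoid E] [AddCommMonoid F]
  [Module 𝕜 E] [Module 𝕜 F]

theorem Prod.exists_mem_segment_fst_eq {a b : E × F} {c : E} (hc : c ∈ segment 𝕜 a.1 b.1) :
    ∃ m ∈ segment 𝕜 a b, m.1 = c := by
  obtain ⟨s, t, hs, ht, hst, rfl⟩ := hc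
  exact ⟨s • a + t • b, ⟨s, t, hs, ht, hst, rfl⟩, rfl⟩

theorem Prod.mk_mem_segment_of_fst_eq {u v : E × F} {x : E} {y : F} (hu : u.1 = x)
    (hv : v.1 = x) (hy : y ∈ segment 𝕜 u.2 v.2) : (x, y) ∈ segment 𝕜 u v := by
  rw [← Prod.mk.eta (p := u), ← Prod.mk.eta (p := v), hu, hv, ← Prod.image_mk_segment_right]
  exact mem_image_of_mem _ hy

theorem mem_convexHull_of_mem_segment_of_mem_segment {a b c u v x : E}
    (hu : u ∈ segment 𝕜 a b) (hv : v ∈ segment 𝕜 a c) (hx : x ∈ segment 𝕜 u v) :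
    x ∈ convexHull 𝕜 {a, b, c} :=
  (convex_convexHull 𝕜 {a, b, c}).segment_subset
    (segment_subset_convexHull (by simp) (by simp) hu)
    (segment_subset_convexHull (by simp) (by simp) hv) hx

end Segment

theorem mem_convexHull_of_sector_points_general (l : ℝ × ℝ)
    (p : Fin 4 → ℝ × ℝ)
    (h0 : l.1 ≤ (p 0).1 ∧ l.2 ≤ (p 0).2)
    (h1 : (p 1).1 ≤ l.1 ∧ l.2 ≤ (p 1).2)
    (h2 : (p 2).1 ≤ l.1 ∧ (p 2).2 ≤ l.2)
    (h3 : l.1 ≤ (p 3).1 ∧ (p 3).2 ≤ l.2) :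
    l ∈ convexHull ℝ (Set.range p) ∧
      ∃ s : Finset (Fin 4), s.card = 3 ∧ l ∈ convexHull ℝ (p '' ↑s) := by
  have crossing {i j : Fin 4} (hi : (p i).1 ≤ l.1) (hj : l.1 ≤ (p j).1) :
      ∃ m ∈ segment ℝ (p i) (p j), m.1 = l.1 :=
    Prod.exists_mem_segment_fst_eq (Icc_subset_segment ⟨hi, hj⟩)
  have triangle : ∃ s : Finset (Fin 4), s.card = 3 ∧ l ∈ convexHull ℝ (p '' ↑s) := by
    obtain ⟨m, hm, hm₁⟩ := crossing h2.1 h0.1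
    rcases le_total l.2 m.2 with hlm | hml
    · obtain ⟨w, hw, hw₁⟩ := crossing h2.1 h3.1
      have hwl : w.2 ≤ l.2 :=
        (convex_Iic l.2).segment_subset h2.2 h3.2 (Prod.segment_subset _ _ hw).2
      refine ⟨{2, 3, 0}, rfl, ?_⟩
      simpa [image_insert_eq] using mem_convexHull_of_mem_segment_of_mem_segment hw hm
        (Prod.mk_mem_segment_of_fst_eq hw₁ hm₁ (Icc_subset_segment ⟨hwl, hlm⟩))
    · obtain ⟨q, hq, hq₁⟩ := crossing h1.1 h0.1
      have hlq : l.2 ≤ q.2 :=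
        (convex_Ici l.2).segment_subset h1.2 h0.2 (Prod.segment_subset _ _ hq).2
      refine ⟨{0, 2, 1}, rfl, ?_⟩
      simpa [image_insert_eq] using mem_convexHull_of_mem_segment_of_mem_segment
        (segment_symm ℝ (p 2) (p 0) ▸ hm) (segment_symm ℝ (p 1) (p 0) ▸ hq)
        (Prod.mk_mem_segment_of_fst_eq hm₁ hq₁ (Icc_subset_segment ⟨hml, hlq⟩))
  obtain ⟨s, hs, hl⟩ := triangle
  exact ⟨convexHull_mono (image_subset_range p s) hl, s, hs, hl⟩

/-- If each of the four closed quadrant-sectors (of angle π/2) of the disk of radius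
`r` centered at `l ∈ ℝ²` contains one of the points `p 0, p 1, p 2, p 3`, then `l`
lies in the convex hull of these four points, and moreover in the convex hull of some
three of them. -/
theorem mem_convexHull_of_sector_points (l : ℝ × ℝ) (r : ℝ) (hr : 0 < r)
    (p : Fin 4 → ℝ × ℝ)
    (hdist : ∀ i, dist (p i) l ≤ r)
    (h0 : l.1 ≤ (p 0).1 ∧ l.2 ≤ (p 0).2)
    (h1 : (p 1).1 ≤ l.1 ∧ l.2 ≤ (p 1).2)
    (h2 : (p 2).1 ≤ l.1 ∧ (p 2).2 ≤ l.2)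
    (h3 : l.1 ≤ (p 3).1 ∧ (p 3).2 ≤ l.2) :
    l ∈ convexHull ℝ (Set.range p) ∧
      ∃ s : Finset (Fin 4), s.card = 3 ∧ l ∈ convexHull ℝ (p '' ↑s) :=
  mem_convexHull_of_sector_points_general l p h0 h1 h2 h3
end

section
/- Let κ = {p₀,…,p_m} be m+1 affinely independent points in ℝ^m and l a point with l ∉ conv(κ). Then ∑_{k=0}^{m} vol(conv((κ \ {p_k}) ∪ {l})) > vol(conv(κ)). -/
/-!
The affine map `x ↦ x + λₖ(x) (l - pₖ)`, with `λₖ` the `k`-th barycentric coordinate, fixes every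
vertex except `pₖ`, which it sends to `l`. Its linear part is a rank-one perturbation of the
identity, of determinant `1 + λₖ(l - pₖ) = λₖ(l)`, so the `k`-th subsimplex has volume
`|λₖ(l)|` times that of the simplex. The coordinates `λₖ(l)` sum to `1`, and one of them is
negative because `l` lies outside the simplex; hence `∑ₖ |λₖ(l)| > 1`.
-/

open Set MeasureTheory Finset Pointwise

theorem Set.range_update {α β : Type*} [DecidableEq α] (f : α → β) (a : α) (b : β) :
    range (Function.update f a b) = insert b (f '' {a}ᶜ) := by
  rw [← insert_image_compl_eq_range, Function.update_self]
  congr 1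
  exact image_congr fun x hx => Function.update_of_ne hx b f

theorem LinearMap.det_id_add_smulRight {R M : Type*} [CommRing R] [AddCommGroup M] [Module R M]
    [Module.Free R M] [Module.Finite R M] (f : M →ₗ[R] R) (v : M) :
    LinearMap.det (LinearMap.id + f.smulRight v) = 1 + f v := by
  classical
  let e := Module.Free.chooseBasis R M
  have hmat : LinearMap.toMatrix e e (f.smulRight v) =
      Matrix.replicateCol Unit (e.repr v) * Matrix.replicateRow Unit (fun j => f (e j)) := by
    ext i j
    simp [LinearMap.toMatrix_apply, Matrix.mul_apply, mul_comm]
  rw [← LinearMap.det_toMatrix e, map_add, LinearMap.toMatrix_id, hmat,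
    Matrix.det_one_add_replicateCol_mul_replicateRow]
  congr 1
  conv_rhs => rw [← e.sum_repr v, map_sum]
  simp [dotProduct, mul_comm]

namespace AffineBasis

variable {ι k V : Type*} [AddCommGroup V]

section Ring

variable [Ring k] [Module k V]

noncomputable def replaceVertex (b : AffineBasis ι k V) (i : ι) (l : V) : V →ᵃ[k] V where
  toFun x := x + b.coord i x • (l - b i)
  linear := LinearMap.id + (b.coord i).linear.smulRight (l - b i)
  map_vadd' x v := by
    rw [AffineMap.map_vadd]
    simp only [vadd_eq_add, add_smul, LinearMap.add_apply,
      LinearMap.id_apply, LinearMap.smulRight_apply]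
    abel

theorem replaceVertex_apply (b : AffineBasis ι k V) (i : ι) (l x : V) :
    b.replaceVertex i l x = x + b.coord i x • (l - b i) := rfl

theorem replaceVertex_linear (b : AffineBasis ι k V) (i : ι) (l : V) :
    (b.replaceVertex i l).linear = LinearMap.id + (b.coord i).linear.smulRight (l - b i) := rfl

theorem replaceVertex_comp [DecidableEq ι] (b : AffineBasis ι k V) (i : ι) (l : V) :
    b.replaceVertex i l ∘ b = Function.update b i l := by
  ext1 j
  rcases eq_or_ne j i with rfl | hj
  · simp [replaceVertex_apply]
  · simp [replaceVertex_apply, b.coord_apply_ne hj.symm, hj]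

end Ring

theorem det_replaceVertex_linear [Field k] [Module k V] [FiniteDimensional k V]
    (b : AffineBasis ι k V) (i : ι) (l : V) :
    LinearMap.det (b.replaceVertex i l).linear = b.coord i l := by
  rw [replaceVertex_linear, LinearMap.det_id_add_smulRight, ← vsub_eq_sub,
    AffineMap.linearMap_vsub, b.coord_apply_eq, vsub_eq_sub, add_sub_cancel]

theorem one_lt_sum_abs_coord [Field k] [LinearOrder k] [IsStrictOrderedRing k]
    [Module k V] [Fintype ι] (b : AffineBasis ι k V) {x : V} (hx : x ∉ convexHull k (range b)) :
    1 < ∑ i, |b.coord i x| := by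
  obtain ⟨i, hi⟩ : ∃ i, b.coord i x < 0 := by
    simpa [b.convexHull_eq_nonneg_coord] using hx
  calc 1 = ∑ i, b.coord i x := (b.sum_coord_apply_eq_one x).symm
    _ < ∑ i, |b.coord i x| :=
      Finset.sum_lt_sum (fun j _ => le_abs_self _) ⟨i, mem_univ i, by rw [abs_of_neg hi]; linarith⟩

end AffineBasis

theorem MeasureTheory.Measure.addHaar_image_affineMap {E : Type*} [NormedAddCommGroup E]
    [NormedSpace ℝ E] [MeasurableSpace E] [BorelSpace E] [FiniteDimensional ℝ E]
    (μ : Measure E) [μ.IsAddHaarMeasure] (f : E →ᵃ[ℝ] E) (s : Set E) :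
    μ (f '' s) = ENNReal.ofReal |LinearMap.det f.linear| * μ s := by
  have himage : f '' s = f 0 +ᵥ f.linear '' s := by
    rw [← Set.image_vadd, image_image]
    refine image_congr fun x _ => ?_
    rw [vadd_eq_add, add_comm, ← vadd_eq_add, ← f.map_vadd, vadd_eq_add, add_zero]
  rw [himage, measure_vadd, addHaar_image_linearMap]

namespace AffineBasis

variable {ι E : Type*} [NormedAddCommGroup E] [NormedSpace ℝ E] [MeasurableSpace E]
  [FiniteDimensional ℝ E] (μ : Measure E) [μ.IsAddHaarMeasure]

theorem addHaar_convexHull_update [BorelSpace E] [DecidableEq ι] (b : AffineBasis ι ℝ E) (i : ι)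
    (l : E) :
    μ (convexHull ℝ (range (Function.update b i l))) =
      ENNReal.ofReal |b.coord i l| * μ (convexHull ℝ (range b)) := by
  rw [← b.replaceVertex_comp i l, range_comp, ← AffineMap.image_convexHull,
    μ.addHaar_image_affineMap, det_replaceVertex_linear]

theorem addHaar_convexHull_pos [Fintype ι] (b : AffineBasis ι ℝ E) :
    0 < μ (convexHull ℝ (range b)) :=
  μ.measure_pos_of_nonempty_interior (interior_convexHull_nonempty_iff_affineSpan_eq_top.2 b.tot)

end AffineBasis

/-- Convex hull inclusion test, exterior case: if `l` lies outside the convex hull of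
the affinely independent points `p 0, …, p m` of `ℝ^m`, then the total volume of the
`m+1` simplices obtained by replacing one vertex by `l` strictly exceeds the volume of
the original simplex. -/
theorem sum_subsimplex_volumes_gt {m : ℕ}
    (p : Fin (m + 1) → (Fin m → ℝ)) (hp : AffineIndependent ℝ p)
    (l : Fin m → ℝ) (hl : l ∉ convexHull ℝ (Set.range p)) :
    ∑ k : Fin (m + 1),
        volume (convexHull ℝ (insert l (p '' {i | i ≠ k}))) >
      volume (convexHull ℝ (Set.range p)) := by
  let b : AffineBasis (Fin (m + 1)) ℝ (Fin m → ℝ) :=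
    ⟨p, hp, hp.affineSpan_eq_top_iff_card_eq_finrank_add_one.2 (by simp)⟩
  have hV₀ := (b.addHaar_convexHull_pos volume).ne'
  have hV_top := (((finite_range b).isCompact_convexHull ℝ).measure_lt_top (μ := volume)).ne
  simp_rw [← compl_singleton_eq, ← range_update]
  change volume (convexHull ℝ (range b)) <
    ∑ k, volume (convexHull ℝ (range (Function.update b k l)))
  simp_rw [b.addHaar_convexHull_update volume, ← Finset.sum_mul,
    ← ENNReal.ofReal_sum_of_nonneg fun k _ => abs_nonneg (b.coord k l)]
  calc volume (convexHull ℝ (range b)) = ENNReal.ofReal 1 * volume (convexHull ℝ (range b)) := by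
        rw [ENNReal.ofReal_one, one_mul]
    _ < ENNReal.ofReal (∑ k, |b.coord k l|) * volume (convexHull ℝ (range b)) := by
        gcongr
        exact ENNReal.ofReal_lt_ofReal_iff_of_nonneg zero_le_one |>.2 (b.one_lt_sum_abs_coord hl)
end
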